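/- Let q = p^n = Mf + 1 be a prime power with M ≥ 2 and f ≥ 1, let α be a primitive element of F_q, and let C_r = {α^{Ml+r} : 0 ≤ l ≤ f−1}, 0 ≤ r ≤ M−1, be the cyclotomic classes of order M. For 0 ≤ i ≤ M−1 define X_i : Z_{q−1} → Z_M by X_i(t) = r + i (mod M) if α^t + 1 ∈ C_r, and X_i(t) = i if α^t + 1 = 0. Then the (q−1, M, M)-FHS set U = {X_0, …, X_{M−1}} has optimal AHC, i.e., A_a(U)/((q−1)(M−1)) + A_c(U)/(q−2) = ((q−1)M − M)/(M(q−2)(M−1)), and its maximum Hamming correlation satisfies H(U) ≤ f + 2, where H(U) is the maximum of all out-of-phase Hamming autocorrelation values H_{X_i}(τ) (1 ≤ τ ≤ q−2) and all Hamming crosscorrelation values H_{X_i,X_j}(τ) (i ≠ j, 0 ≤ τ ≤ q−2). -/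

import Mathlib

open Finset

/-- Periodic Hamming correlation of two FHSs `X, Y : ZMod N → F` at shift `τ`. -/
def Hcorr {N : ℕ} [NeZero N] {F : Type*} [DecidableEq F]
    (X Y : ZMod N → F) (τ : ZMod N) : ℕ :=
  (Finset.univ.filter (fun t => X t = Y (t + τ))).card

/-- `N_X(a)`: number of occurrences of frequency `a` in the FHS `X`. -/
def countFreq {N : ℕ} [NeZero N] {F : Type*} [DecidableEq F]
    (X : ZMod N → F) (a : F) : ℕ :=
  (Finset.univ.filter (fun t => X t = a)).card

/-- `N_U(a)`: total number of occurrences of `a` in the FHS set `U`. -/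
def countFreqSet {N L : ℕ} [NeZero N] {F : Type*} [DecidableEq F]
    (U : Fin L → ZMod N → F) (a : F) : ℕ :=
  ∑ i : Fin L, countFreq (U i) a

/-- `S_a(U)`: sum of all out-of-phase Hamming autocorrelation values. -/
def Sa {N L : ℕ} [NeZero N] {F : Type*} [DecidableEq F]
    (U : Fin L → ZMod N → F) : ℕ :=
  ∑ i : Fin L, ∑ τ ∈ Finset.univ \ {(0 : ZMod N)}, Hcorr (U i) (U i) τ

/-- `S_c(U)`: sum of all Hamming crosscorrelation values (ordered pairs `i ≠ j`). -/
def Sc {N L : ℕ} [NeZero N] {F : Type*} [DecidableEq F]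
    (U : Fin L → ZMod N → F) : ℕ :=
  ∑ i : Fin L, ∑ j ∈ Finset.univ \ {i}, ∑ τ : ZMod N, Hcorr (U i) (U j) τ

/-- Average Hamming autocorrelation `A_a(U) = S_a(U)/(L(N-1))`. -/
def Aa {N L : ℕ} [NeZero N] {F : Type*} [DecidableEq F]
    (U : Fin L → ZMod N → F) : ℚ :=
  (Sa U : ℚ) / ((L : ℚ) * ((N : ℚ) - 1))

/-- Average Hamming crosscorrelation `A_c(U) = S_c(U)/(L(L-1)N)`. -/
def Ac {N L : ℕ} [NeZero N] {F : Type*} [DecidableEq F]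
    (U : Fin L → ZMod N → F) : ℚ :=
  (Sc U : ℚ) / ((L : ℚ) * ((L : ℚ) - 1) * (N : ℚ))

/-- `H_a(U)`: maximum out-of-phase Hamming autocorrelation of the set `U`. -/
def Ha {N L : ℕ} [NeZero N] {F : Type*} [DecidableEq F]
    (U : Fin L → ZMod N → F) : ℕ :=
  Finset.univ.sup fun i => (Finset.univ \ {(0 : ZMod N)}).sup fun τ => Hcorr (U i) (U i) τ

/-- `H_c(U)`: maximum Hamming crosscorrelation of the set `U`. -/
def Hc {N L : ℕ} [NeZero N] {F : Type*} [DecidableEq F]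
    (U : Fin L → ZMod N → F) : ℕ :=
  Finset.univ.sup fun i => (Finset.univ \ {i}).sup fun j =>
    Finset.univ.sup fun τ => Hcorr (U i) (U j) τ

/-- `U` has optimal average Hamming correlation (meets the Peng et al. AHC bound with equality). -/
def optimalAHC {N L : ℕ} [NeZero N] {F : Type*} [Fintype F] [DecidableEq F]
    (U : Fin L → ZMod N → F) : Prop :=
  Aa U / ((N : ℚ) * ((L : ℚ) - 1)) + Ac U / ((N : ℚ) - 1)
    = ((N : ℚ) * L - Fintype.card F) /
      ((Fintype.card F : ℚ) * ((N : ℚ) - 1) * ((L : ℚ) - 1))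

/-- The cyclotomic class `C_r = {α^(Ml+r) : 0 ≤ l ≤ f-1}`. -/
def cycClass {F : Type*} [Monoid F] [DecidableEq F] (α : F) (M f r : ℕ) : Finset F :=
  (Finset.range f).image fun l => α ^ (M * l + r)

/-- The cyclotomic number `(i,j)_M = |(C_i + 1) ∩ C_j|`. -/
def cycNum {F : Type*} [Field F] [DecidableEq F] (α : F) (M f i j : ℕ) : ℕ :=
  (((cycClass α M f i).image fun x => x + 1) ∩ cycClass α M f j).card

/-! The sequences are `X_i = ψ + i`, where `ψ(t)` is the cyclotomic class of `α^t + 1`, taken to be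
`0` at the pole `α^t = -1`. As `t ↦ α^t + 1` is a bijection onto `F \ {1}` and `1 ∈ C_0`, every
frequency occurs exactly `f` times in each `X_i`, and for such balanced sets the sums `S_a`, `S_c`
are forced and meet the AHC bound. Away from the two shifts where `α^t + 1` or `α^(t+τ) + 1`
vanishes, `X_i(t) = X_j(t + τ)` says that `(α^t + 1) / (α^τ α^t + 1) ∈ C_(j-i)`; for `τ ≠ 0` this
Möbius map is injective in `α^t`, so there are at most `|C_(j-i)| = f` such `t`. -/

section Correlation

variable {N : ℕ} [NeZero N] {G : Type*} [DecidableEq G]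

theorem sum_Hcorr_of_countFreq (X Y : ZMod N → G) {c : ℕ} (hY : ∀ a, countFreq Y a = c) :
    ∑ τ : ZMod N, Hcorr X Y τ = N * c := by
  have key : ∀ t : ZMod N, (∑ τ : ZMod N, if X t = Y (t + τ) then 1 else 0) = c := by
    intro t
    rw [← hY (X t), countFreq, card_filter]
    exact Fintype.sum_equiv (Equiv.addLeft t) _ _ fun τ => if_congr eq_comm rfl rfl
  calc ∑ τ : ZMod N, Hcorr X Y τ
      = ∑ τ : ZMod N, ∑ t : ZMod N, if X t = Y (t + τ) then 1 else 0 := by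
        simp only [Hcorr, card_filter]
    _ = ∑ t : ZMod N, ∑ τ : ZMod N, if X t = Y (t + τ) then 1 else 0 := sum_comm
    _ = N * c := by simp [key, ZMod.card]

theorem Hcorr_self_zero (X : ZMod N → G) : Hcorr X X 0 = N := by
  simp [Hcorr, ZMod.card]

variable {L : ℕ} {U : Fin L → ZMod N → G} {c : ℕ}

theorem Sa_add_of_countFreq (hU : ∀ i a, countFreq (U i) a = c) :
    Sa U + L * N = L * (N * c) := by
  have h : ∀ i, ∑ τ ∈ univ \ {(0 : ZMod N)}, Hcorr (U i) (U i) τ + N = N * c := fun i => by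
    rw [← sum_Hcorr_of_countFreq (U i) (U i) (hU i),
      sum_eq_sum_sdiff_singleton_add (mem_univ 0), Hcorr_self_zero]
  simpa [Sa, sum_add_distrib, mul_comm] using sum_congr rfl fun i (_ : i ∈ univ) => h i

theorem Sc_of_countFreq (hU : ∀ i a, countFreq (U i) a = c) :
    Sc U = L * ((L - 1) * (N * c)) := by
  simp [Sc, sum_Hcorr_of_countFreq _ _ (hU _), card_sdiff_of_subset]

theorem optimalAHC_of_countFreq [Fintype G] (hL : 2 ≤ L) (hN : N = Fintype.card G * c)
    (hU : ∀ i a, countFreq (U i) a = c) : optimalAHC U := by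
  have hSa : (Sa U : ℚ) = L * N * c - L * N := by
    have := congrArg (Nat.cast (R := ℚ)) (Sa_add_of_countFreq hU); push_cast at this; linarith
  have hSc : (Sc U : ℚ) = L * (L - 1) * N * c := by
    rw [Sc_of_countFreq hU]; push_cast [Nat.cast_sub (by omega : 1 ≤ L)]; ring
  have hL' : (2 : ℚ) ≤ L := by exact_mod_cast hL
  obtain ⟨hG, hc⟩ : Fintype.card G ≠ 0 ∧ c ≠ 0 := mul_ne_zero_iff.1 (hN ▸ NeZero.ne N)
  unfold optimalAHC Aa Ac
  rw [hSa, hSc, show (N : ℚ) = Fintype.card G * c by exact_mod_cast hN]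
  field_simp
  ring

end Correlation

theorem injOn_add_one_div_mul_add_one {K : Type*} [Field K] {c : K} (hc : c ≠ 1) :
    Set.InjOn (fun x => (x + 1) / (c * x + 1)) {x | c * x + 1 ≠ 0} := by
  intro x hx y hy h
  rw [div_eq_div_iff hx hy] at h
  have : (x - y) * (1 - c) = 0 := by linear_combination h
  simpa [sub_eq_zero, hc.symm] using this

section Cyclotomy

variable {K : Type*} [Field K] {N M f : ℕ} {α : K}

theorem IsPrimitiveRoot.pow_val_natCast (hα : IsPrimitiveRoot α N) (k : ℕ) :
    α ^ (k : ZMod N).val = α ^ k := by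
  rw [ZMod.val_natCast, ← pow_eq_pow_mod _ hα.pow_eq_one]

theorem card_cycClass [DecidableEq K] (hα : IsPrimitiveRoot α N) (hN : N = M * f) {r : ℕ}
    (hr : r < M) : #(cycClass α M f r) = f := by
  have hlt : ∀ l ∈ range f, M * l + r < N := fun l hl => by
    have := mem_range.1 hl
    rw [hN]
    nlinarith
  rw [cycClass, card_image_of_injOn, card_range]
  intro l hl l' hl' h
  have := hα.pow_inj (hlt l hl) (hlt l' hl') h
  exact Nat.eq_of_mul_eq_mul_left (by omega) (Nat.add_right_cancel this)

variable [NeZero N]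

theorem IsPrimitiveRoot.pow_val_add (hα : IsPrimitiveRoot α N) (s t : ZMod N) :
    α ^ (s + t).val = α ^ s.val * α ^ t.val := by
  rw [ZMod.val_add, ← pow_eq_pow_mod _ hα.pow_eq_one, pow_add]

theorem IsPrimitiveRoot.pow_val_injective (hα : IsPrimitiveRoot α N) :
    Function.Injective fun t : ZMod N => α ^ t.val :=
  fun s t h => ZMod.val_injective N (hα.pow_inj (ZMod.val_lt s) (ZMod.val_lt t) h)

theorem IsPrimitiveRoot.pow_val_ne_zero (hα : IsPrimitiveRoot α N) (t : ZMod N) : α ^ t.val ≠ 0 :=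
  pow_ne_zero _ (hα.ne_zero (NeZero.ne N))

noncomputable def discreteLog (α : K) (N : ℕ) [NeZero N] : K → ZMod N :=
  Function.invFun fun t : ZMod N => α ^ t.val

noncomputable def cyclotomicIndex (α : K) (N M : ℕ) [NeZero N] (x : K) : ZMod M :=
  (discreteLog α N x).cast

theorem discreteLog_pow_val (hα : IsPrimitiveRoot α N) (t : ZMod N) :
    discreteLog α N (α ^ t.val) = t :=
  Function.leftInverse_invFun hα.pow_val_injective t

theorem pow_val_discreteLog (hα : IsPrimitiveRoot α N)
    (hgen : ∀ x : K, x ≠ 0 → ∃ k : ℕ, α ^ k = x) {x : K} (hx : x ≠ 0) :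
    α ^ (discreteLog α N x).val = x := by
  obtain ⟨k, rfl⟩ := hgen x hx
  exact Function.invFun_eq (f := fun t : ZMod N => α ^ t.val) ⟨k, hα.pow_val_natCast k⟩

theorem discreteLog_mul (hα : IsPrimitiveRoot α N)
    (hgen : ∀ x : K, x ≠ 0 → ∃ k : ℕ, α ^ k = x) {x y : K} (hx : x ≠ 0) (hy : y ≠ 0) :
    discreteLog α N (x * y) = discreteLog α N x + discreteLog α N y := by
  conv_lhs => rw [← pow_val_discreteLog hα hgen hx, ← pow_val_discreteLog hα hgen hy,
    ← hα.pow_val_add, discreteLog_pow_val hα]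

theorem cyclotomicIndex_pow (hα : IsPrimitiveRoot α N) (hM : M ∣ N) (k : ℕ) :
    cyclotomicIndex α N M (α ^ k) = k := by
  rw [cyclotomicIndex, ← hα.pow_val_natCast, discreteLog_pow_val hα, ZMod.cast_natCast hM]

theorem cyclotomicIndex_one (hα : IsPrimitiveRoot α N) (hM : M ∣ N) :
    cyclotomicIndex α N M 1 = 0 := by
  simpa using cyclotomicIndex_pow hα hM 0

theorem cyclotomicIndex_div (hα : IsPrimitiveRoot α N)
    (hgen : ∀ x : K, x ≠ 0 → ∃ k : ℕ, α ^ k = x) (hM : M ∣ N) {x y : K} (hx : x ≠ 0) (hy : y ≠ 0) :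
    cyclotomicIndex α N M (x / y) = cyclotomicIndex α N M x - cyclotomicIndex α N M y := by
  have h := discreteLog_mul hα hgen (div_ne_zero hx hy) hy
  rw [div_mul_cancel₀ x hy] at h
  rw [eq_sub_iff_add_eq, cyclotomicIndex, cyclotomicIndex, cyclotomicIndex, h, ZMod.cast_add hM]

theorem mem_cycClass_iff [DecidableEq K] (hα : IsPrimitiveRoot α N)
    (hgen : ∀ x : K, x ≠ 0 → ∃ k : ℕ, α ^ k = x) (hN : N = M * f) {r : ℕ} (hr : r < M) {x : K} :
    x ∈ cycClass α M f r ↔ x ≠ 0 ∧ cyclotomicIndex α N M x = r := by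
  constructor
  · intro hx
    obtain ⟨l, -, rfl⟩ := mem_image.1 hx
    refine ⟨pow_ne_zero _ (hα.ne_zero (NeZero.ne N)), ?_⟩
    rw [cyclotomicIndex_pow hα ⟨f, hN⟩]
    simp
  · rintro ⟨hx, hidx⟩
    set d := (discreteLog α N x).val
    have hd : d < M * f := hN ▸ ZMod.val_lt _
    have hdr : d % M = r := by
      rw [cyclotomicIndex, ZMod.cast_eq_val, ZMod.natCast_eq_natCast_iff'] at hidx
      rwa [Nat.mod_eq_of_lt hr] at hidx
    refine mem_image.2 ⟨d / M, mem_range.2 ?_, ?_⟩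
    · rw [Nat.div_lt_iff_lt_mul (by omega)]
      linarith
    · rw [← hdr, Nat.div_add_mod]
      exact pow_val_discreteLog hα hgen hx

theorem card_filter_cyclotomicIndex_eq [Fintype K] [DecidableEq K] (hα : IsPrimitiveRoot α N)
    (hgen : ∀ x : K, x ≠ 0 → ∃ k : ℕ, α ^ k = x) (hN : N = M * f) (b : ZMod M) :
    #{x | x ≠ 0 ∧ cyclotomicIndex α N M x = b} = f := by
  have : NeZero M := ⟨left_ne_zero_of_mul (hN ▸ NeZero.ne N)⟩
  rw [← card_cycClass hα hN (ZMod.val_lt b)]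
  congr 1
  ext x
  simp [mem_cycClass_iff hα hgen hN (ZMod.val_lt b)]

theorem pow_val_add_one_eq_zero_iff (hα : IsPrimitiveRoot α N)
    (hgen : ∀ x : K, x ≠ 0 → ∃ k : ℕ, α ^ k = x) {t : ZMod N} :
    α ^ t.val + 1 = 0 ↔ t = discreteLog α N (-1) := by
  rw [add_eq_zero_iff_eq_neg]
  constructor
  · intro h
    rw [← h, discreteLog_pow_val hα]
  · rintro rfl
    exact pow_val_discreteLog hα hgen (neg_ne_zero.2 one_ne_zero)

variable [DecidableEq K]

/-- The sequence `X_i` of Construction B. Swapping `0` and `1` realises the value `i` at the pole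
`α ^ t + 1 = 0` (as `1 ∈ C_0`), and makes `t ↦ swap 0 1 (α ^ t + 1)` a bijection onto `Kˣ`. -/
noncomputable def cyclotomicFHS (α : K) (N M : ℕ) [NeZero N] (i : ZMod M) (t : ZMod N) : ZMod M :=
  cyclotomicIndex α N M (Equiv.swap 0 1 (α ^ t.val + 1)) + i

theorem cyclotomicFHS_of_ne (hα : IsPrimitiveRoot α N) {i : ZMod M} {t : ZMod N}
    (ht : α ^ t.val + 1 ≠ 0) :
    cyclotomicFHS α N M i t = cyclotomicIndex α N M (α ^ t.val + 1) + i := by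
  rw [cyclotomicFHS, Equiv.swap_apply_of_ne_of_ne ht]
  exact fun h => hα.pow_val_ne_zero t (add_eq_right.1 h)

theorem cyclotomicFHS_of_eq (hα : IsPrimitiveRoot α N) (hM : M ∣ N) {i : ZMod M} {t : ZMod N}
    (ht : α ^ t.val + 1 = 0) : cyclotomicFHS α N M i t = i := by
  rw [cyclotomicFHS, ht, Equiv.swap_apply_left, cyclotomicIndex_one hα hM, zero_add]

theorem eq_cyclotomicFHS (hα : IsPrimitiveRoot α N)
    (hgen : ∀ x : K, x ≠ 0 → ∃ k : ℕ, α ^ k = x) (hN : N = M * f) {X : ZMod N → ZMod M} {i : ZMod M}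
    (h0 : ∀ t, α ^ t.val + 1 = 0 → X t = i)
    (hC : ∀ t (r : ℕ), r < M → α ^ t.val + 1 ∈ cycClass α M f r → X t = r + i) :
    X = cyclotomicFHS α N M i := by
  have : NeZero M := ⟨left_ne_zero_of_mul (hN ▸ NeZero.ne N)⟩
  funext t
  by_cases ht : α ^ t.val + 1 = 0
  · rw [h0 t ht, cyclotomicFHS_of_eq hα ⟨f, hN⟩ ht]
  · set r := (cyclotomicIndex α N M (α ^ t.val + 1)).val
    have hr : r < M := ZMod.val_lt _
    rw [hC t r hr ((mem_cycClass_iff hα hgen hN hr).2 ⟨ht, (ZMod.natCast_zmod_val _).symm⟩),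
      cyclotomicFHS_of_ne hα ht, ZMod.natCast_zmod_val]

theorem countFreq_cyclotomicFHS [Fintype K] (hα : IsPrimitiveRoot α N)
    (hgen : ∀ x : K, x ≠ 0 → ∃ k : ℕ, α ^ k = x) (hN : N = M * f) (i a : ZMod M) :
    countFreq (cyclotomicFHS α N M i) a = f := by
  have hswap : ∀ {x : K}, x ≠ 0 → Equiv.swap 0 1 x - 1 ≠ 0 := fun hx => by
    rwa [sub_ne_zero, Ne, Equiv.swap_apply_eq_iff, Equiv.swap_apply_right]
  rw [← card_filter_cyclotomicIndex_eq hα hgen hN (a - i), countFreq]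
  refine card_nbij' (fun t => Equiv.swap 0 1 (α ^ t.val + 1))
    (fun x => discreteLog α N (Equiv.swap 0 1 x - 1)) ?_ ?_ ?_ ?_
  · intro t ht
    simp only [mem_coe, mem_filter, mem_univ, true_and] at ht ⊢
    rw [cyclotomicFHS] at ht
    refine ⟨?_, eq_sub_of_add_eq ht⟩
    rw [Ne, Equiv.swap_apply_eq_iff, Equiv.swap_apply_left]
    exact fun h => hα.pow_val_ne_zero t (add_eq_right.1 h)
  · intro x hx
    simp only [mem_coe, mem_filter, mem_univ, true_and] at hx ⊢
    rw [cyclotomicFHS, pow_val_discreteLog hα hgen (hswap hx.1), sub_add_cancel,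
      Equiv.swap_apply_self, hx.2, sub_add_cancel]
  · intro t _
    simp [discreteLog_pow_val hα]
  · intro x hx
    simp only [mem_coe, mem_filter, mem_univ, true_and] at hx
    dsimp only
    rw [pow_val_discreteLog hα hgen (hswap hx.1), sub_add_cancel, Equiv.swap_apply_self]

theorem Hcorr_cyclotomicFHS_zero {i j : ZMod M} (hij : i ≠ j) :
    Hcorr (cyclotomicFHS α N M i) (cyclotomicFHS α N M j) 0 = 0 := by
  simp [Hcorr, cyclotomicFHS, hij]

theorem Hcorr_cyclotomicFHS_le [Fintype K] (hα : IsPrimitiveRoot α N)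
    (hgen : ∀ x : K, x ≠ 0 → ∃ k : ℕ, α ^ k = x) (hN : N = M * f) (i j : ZMod M) {τ : ZMod N}
    (hτ : τ ≠ 0) : Hcorr (cyclotomicFHS α N M i) (cyclotomicFHS α N M j) τ ≤ f + 2 := by
  set pole := discreteLog α N (-1)
  set S := univ.filter fun t => cyclotomicFHS α N M i t = cyclotomicFHS α N M j (t + τ)
  have hc : α ^ τ.val ≠ 1 := fun h => hτ (hα.pow_val_injective (by simpa using h))
  have hT : ∀ t ∈ S \ {pole, pole - τ}, α ^ t.val + 1 ≠ 0 ∧ α ^ τ.val * α ^ t.val + 1 ≠ 0 ∧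
      cyclotomicIndex α N M (α ^ t.val + 1) + i
        = cyclotomicIndex α N M (α ^ τ.val * α ^ t.val + 1) + j := by
    intro t ht
    simp only [S, mem_sdiff, mem_filter, mem_univ, true_and, mem_insert, mem_singleton,
      not_or] at ht
    obtain ⟨heq, hne₁, hne₂⟩ := ht
    have h₁ : α ^ t.val + 1 ≠ 0 := (pow_val_add_one_eq_zero_iff hα hgen).not.2 hne₁
    have h₂ : α ^ (t + τ).val + 1 ≠ 0 :=
      (pow_val_add_one_eq_zero_iff hα hgen).not.2 fun h => hne₂ (eq_sub_of_add_eq h)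
    rw [cyclotomicFHS_of_ne hα h₁, cyclotomicFHS_of_ne hα h₂] at heq
    rw [add_comm t τ, hα.pow_val_add] at h₂ heq
    exact ⟨h₁, h₂, heq⟩
  have hgeneric : #(S \ {pole, pole - τ}) ≤ f := by
    rw [← card_filter_cyclotomicIndex_eq hα hgen hN (j - i)]
    refine card_le_card_of_injOn (fun t => (α ^ t.val + 1) / (α ^ τ.val * α ^ t.val + 1)) ?_ ?_
    · intro t ht
      obtain ⟨h₁, h₂, heq⟩ := hT t ht
      simp only [mem_coe, mem_filter, mem_univ, true_and]
      refine ⟨div_ne_zero h₁ h₂, ?_⟩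
      rw [cyclotomicIndex_div hα hgen ⟨f, hN⟩ h₁ h₂]
      linear_combination heq
    · intro t ht t' ht' h
      exact hα.pow_val_injective
        (injOn_add_one_div_mul_add_one hc (hT t ht).2.1 (hT t' ht').2.1 h)
  calc Hcorr _ _ τ = #S := rfl
    _ ≤ #(S \ {pole, pole - τ}) + #{pole, pole - τ} := card_le_card_sdiff_add_card
    _ ≤ f + 2 := add_le_add hgeneric card_le_two

end Cyclotomy

theorem isPrimitiveRoot_card_sub_one {K : Type*} [Field K] [Fintype K] {α : K}
    (hK : 2 < Fintype.card K) (hgen : ∀ x : K, x ≠ 0 → ∃ k : ℕ, α ^ k = x) :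
    IsPrimitiveRoot α (Fintype.card K - 1) := by
  classical
  have hα : α ≠ 0 := by
    rintro rfl
    have hsub : (univ : Finset K) ⊆ {0, 1} := fun x _ => by
      by_cases hx : x = 0
      · simp [hx]
      · obtain ⟨k, rfl⟩ := hgen x hx
        rcases k with _ | k <;> simp
    have := card_le_card hsub
    have := card_le_two (a := (0 : K)) (b := 1)
    rw [card_univ] at *
    omega
  have hzpowers : ∀ y : Kˣ, y ∈ Subgroup.zpowers (Units.mk0 α hα) := fun y => by
    obtain ⟨k, hk⟩ := hgen y y.ne_zero
    exact ⟨k, Units.ext (by simp [hk])⟩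
  rw [← Fintype.card_units, ← Nat.card_eq_fintype_card,
    ← orderOf_eq_card_of_forall_mem_zpowers hzpowers, ← orderOf_units, Units.val_mk0]
  exact IsPrimitiveRoot.orderOf α

theorem constructionB_general (q M f : ℕ) [NeZero (q - 1)] (hM : 2 ≤ M)
    (hq : q = M * f + 1)
    {F : Type*} [Field F] [Fintype F] [DecidableEq F] (hcard : Fintype.card F = q)
    (α : F) (hα : ∀ x : F, x ≠ 0 → ∃ k : ℕ, α ^ k = x)
    (U : Fin M → ZMod (q - 1) → ZMod M)
    (hU0 : ∀ (i : Fin M) (t : ZMod (q - 1)), α ^ t.val + 1 = 0 → U i t = ((i : ℕ) : ZMod M))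
    (hUC : ∀ (i : Fin M) (t : ZMod (q - 1)) (r : ℕ), r < M →
      α ^ t.val + 1 ∈ cycClass α M f r → U i t = (r : ZMod M) + ((i : ℕ) : ZMod M)) :
    (Aa U / (((q : ℚ) - 1) * ((M : ℚ) - 1)) + Ac U / ((q : ℚ) - 2)
      = (((q : ℚ) - 1) * (M : ℚ) - (M : ℚ)) / ((M : ℚ) * ((q : ℚ) - 2) * ((M : ℚ) - 1))) ∧
    (∀ (i : Fin M) (τ : ZMod (q - 1)), τ ≠ 0 → Hcorr (U i) (U i) τ ≤ f + 2) ∧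
    (∀ (i j : Fin M), i ≠ j → ∀ τ : ZMod (q - 1), Hcorr (U i) (U j) τ ≤ f + 2) := by
  have hN : q - 1 = M * f := by omega
  have hf : f ≠ 0 := right_ne_zero_of_mul (hN ▸ NeZero.ne (q - 1))
  have hK : 2 < Fintype.card F := by
    rw [hcard, hq]
    nlinarith [Nat.one_le_iff_ne_zero.2 hf]
  have hprim : IsPrimitiveRoot α (q - 1) := hcard ▸ isPrimitiveRoot_card_sub_one hK hα
  have hU (i : Fin M) : U i = cyclotomicFHS α (q - 1) M i :=
    eq_cyclotomicFHS hprim hα hN (hU0 i) (hUC i)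
  have : NeZero M := ⟨by omega⟩
  refine ⟨?_, fun i τ hτ => ?_, fun i j hij τ => ?_⟩
  · have h := optimalAHC_of_countFreq (U := U) hM (by rwa [ZMod.card]) fun i a => by
      rw [hU]; exact countFreq_cyclotomicFHS hprim hα hN _ a
    rwa [optimalAHC, ZMod.card, Nat.cast_sub (by omega : 1 ≤ q), Nat.cast_one, sub_sub,
      one_add_one_eq_two] at h
  · rw [hU]
    exact Hcorr_cyclotomicFHS_le hprim hα hN _ _ hτ
  · rw [hU, hU]
    rcases eq_or_ne τ 0 with rfl | hτ
    · have hij' : ((i : ℕ) : ZMod M) ≠ ((j : ℕ) : ZMod M) := fun h => hij (Fin.ext (by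
        simpa [ZMod.natCast_eq_natCast_iff', Nat.mod_eq_of_lt] using h))
      simp [Hcorr_cyclotomicFHS_zero hij']
    · exact Hcorr_cyclotomicFHS_le hprim hα hN _ _ hτ

/-- Theorem 13 (Construction B): optimal AHC and `H(U) ≤ f + 2`. -/
theorem constructionB (q M f : ℕ) [NeZero (q - 1)] (hM : 2 ≤ M) (hf : 1 ≤ f)
    (hq : q = M * f + 1) (hpp : IsPrimePow q)
    {F : Type*} [Field F] [Fintype F] [DecidableEq F] (hcard : Fintype.card F = q)
    (α : F) (hα : ∀ x : F, x ≠ 0 → ∃ k : ℕ, α ^ k = x)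
    (U : Fin M → ZMod (q - 1) → ZMod M)
    (hU0 : ∀ (i : Fin M) (t : ZMod (q - 1)), α ^ t.val + 1 = 0 → U i t = ((i : ℕ) : ZMod M))
    (hUC : ∀ (i : Fin M) (t : ZMod (q - 1)) (r : ℕ), r < M →
      α ^ t.val + 1 ∈ cycClass α M f r → U i t = (r : ZMod M) + ((i : ℕ) : ZMod M)) :
    (Aa U / (((q : ℚ) - 1) * ((M : ℚ) - 1)) + Ac U / ((q : ℚ) - 2)
      = (((q : ℚ) - 1) * (M : ℚ) - (M : ℚ)) / ((M : ℚ) * ((q : ℚ) - 2) * ((M : ℚ) - 1))) ∧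
    (∀ (i : Fin M) (τ : ZMod (q - 1)), τ ≠ 0 → Hcorr (U i) (U i) τ ≤ f + 2) ∧
    (∀ (i j : Fin M), i ≠ j → ∀ τ : ZMod (q - 1), Hcorr (U i) (U j) τ ≤ f + 2) :=
  constructionB_general q M f hM hq hcard α hα U hU0 hUC
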